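/- Suppose R₀ < 2e and Q* ∈ (0,1) satisfies F(Q*) = 0. Then the derivative of the iteration map T at Q* satisfies -1 < T'(Q*) < 1. -/

import Mathlib

open MeasureTheory Real Set Filter

/-- `Λ(x,s) = ∫_s^x θ(t) dt`. -/
noncomputable def Lam (θ : ℝ → ℝ) (x s : ℝ) : ℝ := ∫ t in s..x, θ t

/-- `w(x;Q) = Q e^{-γx} ∫₀^x e^{γs} θ(s) e^{-Q Λ(x,s)} ds`. -/
noncomputable def w (γ : ℝ) (θ : ℝ → ℝ) (Q x : ℝ) : ℝ :=
  Q * Real.exp (-γ * x) * ∫ s in (0:ℝ)..x, Real.exp (γ * s) * θ s * Real.exp (-Q * Lam θ x s)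
/-- The kernel `k(x,s) = (p(x)/N)·θ(s)·e^{-γ(x-s)}`. -/
noncomputable def kker (γ N : ℝ) (p θ : ℝ → ℝ) (x s : ℝ) : ℝ :=
  (p x / N) * θ s * Real.exp (-γ * (x - s))

/-- The triangle `Ω = {(x,s) : 0 ≤ s ≤ x ≤ A}` (first coordinate `x`, second `s`). -/
def Tri (A : ℝ) : Set (ℝ × ℝ) := {q | 0 ≤ q.2 ∧ q.2 ≤ q.1 ∧ q.1 ≤ A}

/-- Basic reproductive number `R₀ = ∬_Ω k(x,s) d(s,x)`. -/
noncomputable def R0 (γ N A : ℝ) (p θ : ℝ → ℝ) : ℝ :=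
  ∫ q in Tri A, kker γ N p θ q.1 q.2

/-- `F(Q) = 1 - ∬_Ω k(x,s) e^{-Q Λ(x,s)} d(s,x)`. -/
noncomputable def FF (γ N A : ℝ) (p θ : ℝ → ℝ) (Q : ℝ) : ℝ :=
  1 - ∫ q in Tri A, kker γ N p θ q.1 q.2 * Real.exp (-Q * Lam θ q.1 q.2)

/-- Iteration map `T(Q) = Q·(1 - F(Q))`. -/
noncomputable def TT (γ N A : ℝ) (p θ : ℝ → ℝ) (Q : ℝ) : ℝ :=
  Q * (1 - FF γ N A p θ Q)

/-!
Put `G(Q) = ∬_Ω k e^{-QΛ}`, so that `F = 1 - G` and `T(Q) = Q G(Q)`. Differentiating under the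
integral sign and using `G(Q*) = 1` gives `T'(Q*) = 1 - ∬_Ω k · (Q*Λ) e^{-Q*Λ}`. This integrand
is positive on the interior of `Ω`, and `t e^{-t} ≤ 1/e` bounds it by `k / e`, so the integral
lies in `(0, R₀/e]`, and `R₀/e < 2`.
-/

section ExpWeightedSetIntegral

variable {X : Type*} [MeasurableSpace X] {μ : Measure X} {s : Set X} {k L : X → ℝ}

theorem hasDerivAt_setIntegral_mul_exp_neg_mul [TopologicalSpace X] [OpensMeasurableSpace X]
    [IsFiniteMeasureOnCompacts μ] (hs : IsCompact s) (hsm : MeasurableSet s)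
    (hk : ContinuousOn k s) (hL : ContinuousOn L s) (Q₀ : ℝ) :
    HasDerivAt (fun Q => ∫ q in s, k q * exp (-Q * L q) ∂μ)
      (-∫ q in s, k q * L q * exp (-Q₀ * L q) ∂μ) Q₀ := by
  have hexp (Q : ℝ) : ContinuousOn (fun q => exp (-Q * L q)) s :=
    continuous_exp.comp_continuousOn (continuousOn_const.mul hL)
  obtain ⟨M, hM⟩ := hs.exists_bound_of_continuousOn hL
  have hbound : ∀ q ∈ s, ∀ Q ∈ Metric.ball Q₀ 1,
      ‖k q * (exp (-Q * L q) * -L q)‖ ≤ ‖k q * L q‖ * exp ((|Q₀| + 1) * M) := by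
    intro q hq Q hQ
    have hQabs : |Q| ≤ |Q₀| + 1 := by
      rw [Metric.mem_ball, Real.dist_eq] at hQ
      linarith [abs_sub_abs_le_abs_sub Q Q₀]
    have hexponent : -Q * L q ≤ (|Q₀| + 1) * M := calc
      -Q * L q ≤ |Q| * ‖L q‖ := by rw [neg_mul, norm_eq_abs, ← abs_mul]; exact neg_le_abs _
      _ ≤ (|Q₀| + 1) * M := mul_le_mul hQabs (hM q hq) (norm_nonneg _) (by positivity)
    calc ‖k q * (exp (-Q * L q) * -L q)‖ = ‖k q * L q‖ * exp (-Q * L q) := by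
          rw [show k q * (exp (-Q * L q) * -L q) = -(k q * L q * exp (-Q * L q)) by ring,
            norm_neg, norm_mul, norm_of_nonneg (exp_pos _).le]
      _ ≤ ‖k q * L q‖ * exp ((|Q₀| + 1) * M) := by gcongr
  have hderiv := hasDerivAt_integral_of_dominated_loc_of_deriv_le (μ := μ.restrict s)
    (F := fun Q q => k q * exp (-Q * L q)) (F' := fun Q q => k q * (exp (-Q * L q) * -L q))
    (Metric.ball_mem_nhds Q₀ one_pos)
    (Eventually.of_forall fun Q => (hk.mul (hexp Q)).aestronglyMeasurable hsm)
    ((hk.mul (hexp Q₀)).integrableOn_compact' hs hsm)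
    ((hk.mul ((hexp Q₀).mul hL.neg)).aestronglyMeasurable hsm)
    (ae_restrict_of_forall_mem hsm hbound)
    (((hk.mul hL).norm.mul continuousOn_const).integrableOn_compact' hs hsm)
    (ae_restrict_of_forall_mem hsm fun q _ Q _ => by
      simpa using (((hasDerivAt_id Q).neg.mul_const (L q)).exp.const_mul (k q)))
  refine hderiv.2.congr_deriv ?_
  rw [← integral_neg]
  congr 1 with q
  ring

theorem mul_setIntegral_mul_exp_neg_mul_le (hsm : MeasurableSet s) (hk : ∀ q ∈ s, 0 ≤ k q)
    (hkint : IntegrableOn k s μ) {Q : ℝ}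
    (hint : IntegrableOn (fun q => k q * L q * exp (-Q * L q)) s μ) :
    Q * ∫ q in s, k q * L q * exp (-Q * L q) ∂μ ≤ exp (-1) * ∫ q in s, k q ∂μ := by
  rw [← integral_const_mul, ← integral_const_mul]
  refine setIntegral_mono_on (hint.const_mul Q) (hkint.const_mul _) hsm fun q hq => ?_
  calc Q * (k q * L q * exp (-Q * L q)) = k q * (Q * L q * exp (-(Q * L q))) := by ring_nf
    _ ≤ k q * exp (-1) := mul_le_mul_of_nonneg_left (mul_exp_neg_le_exp_neg_one _) (hk q hq)
    _ = exp (-1) * k q := mul_comm _ _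

theorem setIntegral_pos_of_pos_on_isOpen [TopologicalSpace X] [μ.IsOpenPosMeasure] {f : X → ℝ}
    {U : Set X}
    (hsm : MeasurableSet s) (hf : IntegrableOn f s μ) (hnn : ∀ x ∈ s, 0 ≤ f x) (hU : IsOpen U)
    (hUne : U.Nonempty) (hUs : U ⊆ s) (hpos : ∀ x ∈ U, 0 < f x) :
    0 < ∫ x in s, f x ∂μ := by
  rw [setIntegral_pos_iff_support_of_nonneg_ae (ae_restrict_of_forall_mem hsm hnn) hf]
  exact (hU.measure_pos μ hUne).trans_le (measure_mono fun x hx => ⟨(hpos x hx).ne', hUs hx⟩)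

end ExpWeightedSetIntegral

theorem Tri_subset_Icc_prod (A : ℝ) : Tri A ⊆ Icc 0 A ×ˢ Icc 0 A :=
  fun _ ⟨h0, h1, h2⟩ => ⟨⟨h0.trans h1, h2⟩, ⟨h0, h1.trans h2⟩⟩

theorem isClosed_Tri (A : ℝ) : IsClosed (Tri A) :=
  (isClosed_le continuous_const continuous_snd).inter
    ((isClosed_le continuous_snd continuous_fst).inter
      (isClosed_le continuous_fst continuous_const))

theorem isCompact_Tri (A : ℝ) : IsCompact (Tri A) :=
  (isCompact_Icc.prod isCompact_Icc).of_isClosed_subset (isClosed_Tri A) (Tri_subset_Icc_prod A)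

theorem TT_eq (γ N A : ℝ) (p θ : ℝ → ℝ) (Q : ℝ) :
    TT γ N A p θ Q = Q * ∫ q in Tri A, kker γ N p θ q.1 q.2 * exp (-Q * Lam θ q.1 q.2) := by
  simp [TT, FF]

section Triangle

variable {γ N A : ℝ} {p θ : ℝ → ℝ}

theorem continuousOn_Lam {a b : ℝ} (hθ : ContinuousOn θ (Icc a b)) :
    ContinuousOn (fun q : ℝ × ℝ => Lam θ q.1 q.2) (Icc a b ×ˢ Icc a b) := by
  rcases lt_or_ge b a with hba | hab
  · simp [Icc_eq_empty_of_lt hba]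
  rw [← uIcc_of_le hab] at hθ ⊢
  have hprim := intervalIntegral.continuousOn_primitive_interval
    (hθ.integrableOn_compact (μ := volume) isCompact_uIcc)
  refine ((hprim.comp continuousOn_fst fun q hq => hq.1).sub
    (hprim.comp continuousOn_snd fun q hq => hq.2)).congr fun q hq => ?_
  exact (intervalIntegral.integral_interval_sub_left
    ((hθ.mono (uIcc_subset_uIcc left_mem_uIcc hq.1)).intervalIntegrable)
    ((hθ.mono (uIcc_subset_uIcc left_mem_uIcc hq.2)).intervalIntegrable)).symm

theorem Lam_pos {x s : ℝ} (hsx : s < x) (hθc : ContinuousOn θ (Icc s x))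
    (hθ : ∀ t ∈ Icc s x, 0 < θ t) : 0 < Lam θ x s :=
  intervalIntegral.intervalIntegral_pos_of_pos_on (hθc.intervalIntegrable_of_Icc hsx.le)
    (fun t ht => hθ t (Ioo_subset_Icc_self ht)) hsx

theorem continuousOn_kker {a b : ℝ} (hp : ContinuousOn p (Icc a b))
    (hθ : ContinuousOn θ (Icc a b)) :
    ContinuousOn (fun q : ℝ × ℝ => kker γ N p θ q.1 q.2) (Icc a b ×ˢ Icc a b) :=
  (((hp.comp continuousOn_fst fun _ hq => hq.1).div_const N).mul
    (hθ.comp continuousOn_snd fun _ hq => hq.2)).mul (by fun_prop)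

theorem kker_pos {x s : ℝ} (hN : 0 < N) (hp : 0 < p x) (hθ : 0 < θ s) :
    0 < kker γ N p θ x s :=
  mul_pos (mul_pos (div_pos hp hN) hθ) (exp_pos _)

theorem kker_pos_of_mem_Tri (hN : 0 < N) (hθ : ∀ x ∈ Icc 0 A, 0 < θ x)
    (hp : ∀ x ∈ Icc 0 A, 0 < p x) {q : ℝ × ℝ} (hq : q ∈ Tri A) : 0 < kker γ N p θ q.1 q.2 :=
  kker_pos hN (hp _ (Tri_subset_Icc_prod A hq).1) (hθ _ (Tri_subset_Icc_prod A hq).2)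

theorem Lam_nonneg_of_mem_Tri (hθ : ∀ x ∈ Icc 0 A, 0 ≤ θ x) {q : ℝ × ℝ} (hq : q ∈ Tri A) :
    0 ≤ Lam θ q.1 q.2 :=
  intervalIntegral.integral_nonneg hq.2.1 fun t ht => hθ t (Icc_subset_Icc hq.1 hq.2.2 ht)

theorem integrableOn_kker_mul_Lam_mul_exp (hθc : ContinuousOn θ (Icc 0 A))
    (hpc : ContinuousOn p (Icc 0 A)) (Q : ℝ) :
    IntegrableOn (fun q : ℝ × ℝ => kker γ N p θ q.1 q.2 * Lam θ q.1 q.2 * exp (-Q * Lam θ q.1 q.2))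
      (Tri A) := by
  have hL := (continuousOn_Lam hθc).mono (Tri_subset_Icc_prod A)
  refine ((((continuousOn_kker hpc hθc).mono (Tri_subset_Icc_prod A)).mul hL).mul ?_)
    |>.integrableOn_compact (isCompact_Tri A)
  exact continuous_exp.comp_continuousOn (continuousOn_const.mul hL)

theorem hasDerivAt_TT (hθc : ContinuousOn θ (Icc 0 A)) (hpc : ContinuousOn p (Icc 0 A)) (Q : ℝ) :
    HasDerivAt (TT γ N A p θ) (1 - FF γ N A p θ Q -
      Q * ∫ q in Tri A, kker γ N p θ q.1 q.2 * Lam θ q.1 q.2 * exp (-Q * Lam θ q.1 q.2)) Q := by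
  have hG := hasDerivAt_setIntegral_mul_exp_neg_mul (μ := volume) (isCompact_Tri A)
    (isClosed_Tri A).measurableSet ((continuousOn_kker (γ := γ) (N := N) hpc hθc).mono
      (Tri_subset_Icc_prod A)) ((continuousOn_Lam hθc).mono (Tri_subset_Icc_prod A)) Q
  rw [funext (TT_eq γ N A p θ)]
  refine ((hasDerivAt_id' Q).fun_mul hG).congr_deriv ?_
  simp only [FF]
  ring

theorem setIntegral_kker_mul_Lam_mul_exp_pos (hA : 0 < A) (hN : 0 < N)
    (hθc : ContinuousOn θ (Icc 0 A)) (hθ : ∀ x ∈ Icc 0 A, 0 < θ x)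
    (hpc : ContinuousOn p (Icc 0 A)) (hp : ∀ x ∈ Icc 0 A, 0 < p x) (Q : ℝ) :
    0 < ∫ q in Tri A, kker γ N p θ q.1 q.2 * Lam θ q.1 q.2 * exp (-Q * Lam θ q.1 q.2) := by
  refine setIntegral_pos_of_pos_on_isOpen (isClosed_Tri A).measurableSet
    (integrableOn_kker_mul_Lam_mul_exp hθc hpc Q) (fun q hq => ?_)
    (U := {q | 0 < q.2 ∧ q.2 < q.1 ∧ q.1 < A}) ((isOpen_lt continuous_const continuous_snd).inter
      ((isOpen_lt continuous_snd continuous_fst).inter (isOpen_lt continuous_fst continuous_const)))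
    ⟨(A / 2, A / 4), by positivity, by linarith, by linarith⟩
    (fun q ⟨h0, h1, h2⟩ => ⟨h0.le, h1.le, h2.le⟩) fun q ⟨h0, h1, h2⟩ => ?_
  · have := kker_pos_of_mem_Tri (γ := γ) hN hθ hp hq
    have := Lam_nonneg_of_mem_Tri (fun x hx => (hθ x hx).le) hq
    positivity
  · have hIcc : Icc q.2 q.1 ⊆ Icc 0 A := Icc_subset_Icc h0.le h2.le
    have := kker_pos_of_mem_Tri (γ := γ) hN hθ hp ⟨h0.le, h1.le, h2.le⟩
    have := Lam_pos h1 (hθc.mono hIcc) fun t ht => hθ t (hIcc ht)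
    positivity

theorem mul_setIntegral_kker_mul_Lam_mul_exp_le (hN : 0 < N)
    (hθc : ContinuousOn θ (Icc 0 A)) (hθ : ∀ x ∈ Icc 0 A, 0 < θ x)
    (hpc : ContinuousOn p (Icc 0 A)) (hp : ∀ x ∈ Icc 0 A, 0 < p x) (Q : ℝ) :
    Q * ∫ q in Tri A, kker γ N p θ q.1 q.2 * Lam θ q.1 q.2 * exp (-Q * Lam θ q.1 q.2) ≤
      exp (-1) * R0 γ N A p θ :=
  mul_setIntegral_mul_exp_neg_mul_le (isClosed_Tri A).measurableSet
    (fun _ hq => (kker_pos_of_mem_Tri hN hθ hp hq).le)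
    (((continuousOn_kker hpc hθc).mono (Tri_subset_Icc_prod A)).integrableOn_compact
      (isCompact_Tri A)) (integrableOn_kker_mul_Lam_mul_exp hθc hpc Q)

end Triangle

theorem T_deriv_abs_lt_one_general (γ A N : ℝ) (hA : 0 < A) (hN : 0 < N)
    (θ p : ℝ → ℝ)
    (hθc : ContinuousOn θ (Set.Icc 0 A)) (hθpos : ∀ x ∈ Set.Icc 0 A, 0 < θ x)
    (hpc : ContinuousOn p (Set.Icc 0 A)) (hppos : ∀ x ∈ Set.Icc 0 A, 0 < p x)
    (hR0 : R0 γ N A p θ < 2 * Real.exp 1)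
    (Qstar : ℝ) (hQmem : Qstar ∈ Set.Ioo (0:ℝ) 1) (hQroot : FF γ N A p θ Qstar = 0) :
    -1 < deriv (TT γ N A p θ) Qstar ∧ deriv (TT γ N A p θ) Qstar < 1 := by
  have hpos := setIntegral_kker_mul_Lam_mul_exp_pos (γ := γ) hA hN hθc hθpos hpc hppos Qstar
  have hle := mul_setIntegral_kker_mul_Lam_mul_exp_le (γ := γ) hN hθc hθpos hpc hppos Qstar
  have hR0e : exp (-1) * R0 γ N A p θ < 2 := by
    rw [exp_neg, inv_mul_lt_iff₀ (exp_pos 1)]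
    linarith
  rw [(hasDerivAt_TT hθc hpc Qstar).deriv, hQroot]
  constructor <;> nlinarith [hQmem.1]

/-- if `R₀ < 2e`, then `-1 < T'(Q*) < 1` at the non-trivial fixed point. -/
theorem T_deriv_abs_lt_one (γ A N : ℝ) (hγ : 0 < γ) (hA : 0 < A) (hN : 0 < N)
    (θ p : ℝ → ℝ)
    (hθc : ContinuousOn θ (Set.Icc 0 A)) (hθpos : ∀ x ∈ Set.Icc 0 A, 0 < θ x)
    (hpc : ContinuousOn p (Set.Icc 0 A)) (hppos : ∀ x ∈ Set.Icc 0 A, 0 < p x)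
    (hnorm : (1/N) * ∫ x in (0:ℝ)..A, p x = 1)
    (hR0 : R0 γ N A p θ < 2 * Real.exp 1)
    (Qstar : ℝ) (hQmem : Qstar ∈ Set.Ioo (0:ℝ) 1) (hQroot : FF γ N A p θ Qstar = 0) :
    -1 < deriv (TT γ N A p θ) Qstar ∧ deriv (TT γ N A p θ) Qstar < 1 :=
  T_deriv_abs_lt_one_general γ A N hA hN θ p hθc hθpos hpc hppos hR0 Qstar hQmem hQroot
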